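/- Let $G$ be a compact Vilenkin group satisfying Condition (A) and let $0 < \alpha \leq 1$, $f \in L^2(\mu_G)$. If $\sum_{\langle \xi \rangle_{\mathscr{G}} > |G/G_k|} d_\xi \|\widehat{f}(\xi)\|_{HS}^2 = \mathcal{O}(|G/G_k|^{-2\alpha})$ as $k \to \infty$, then $f \in Lip_{\mathscr{G}}(\alpha; 2)$, i.e. $\|f(h\,\cdot) - f(\cdot)\|_{L^2(\mu_G)} = \mathcal{O}(|h|_{\mathscr{G}}^{\alpha})$ as $|h|_{\mathscr{G}} \to 0$. -/

import Mathlib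

open MeasureTheory Filter Asymptotics

noncomputable section

/-- The Hilbert–Schmidt (Frobenius) norm of a complex square matrix. -/
def hsNorm {n : ℕ} (M : Matrix (Fin n) (Fin n) ℂ) : ℝ :=
  Real.sqrt (∑ i, ∑ j, ‖M i j‖ ^ 2)

/-- Irreducibility of a unitary representation, via Schur's commutant criterion. -/
def IsIrreducibleRep {G : Type*} [Group G] {n : ℕ}
    (ξ : G →* Matrix.unitaryGroup (Fin n) ℂ) : Prop :=
  ∀ M : Matrix (Fin n) (Fin n) ℂ,
    (∀ x : G, M * (ξ x : Matrix (Fin n) (Fin n) ℂ) = (ξ x : Matrix (Fin n) (Fin n) ℂ) * M) →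
      ∃ c : ℂ, M = c • (1 : Matrix (Fin n) (Fin n) ℂ)

/-- The Fourier coefficient `f̂(ξ) = ∫_G f(x) ξ(x)* dμ(x)` of `f` at a unitary
representation `ξ`. -/
def fourierCoef {G : Type*} [Group G] [TopologicalSpace G] [MeasurableSpace G]
    (μ : Measure G) (f : G → ℂ) {n : ℕ}
    (ξ : G →* Matrix.unitaryGroup (Fin n) ℂ) : Matrix (Fin n) (Fin n) ℂ :=
  Matrix.of fun i j => ∫ x, f x * (starRingEnd ℂ) ((ξ x : Matrix (Fin n) (Fin n) ℂ) j i) ∂μ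

/-- A compact Vilenkin group structure on a profinite group `G`: a strictly decreasing
sequence of open subgroups starting at `G`, forming a neighbourhood basis of the identity,
with finite indices and `2 ≤ |G_n/G_{n+1}|`. -/
structure VilenkinData (G : Type*) [Group G] [TopologicalSpace G] where
  seq : ℕ → Subgroup G
  top_eq : seq 0 = ⊤
  isOpen : ∀ n, IsOpen (seq n : Set G)
  strictAnti : StrictAnti seq
  basis : (nhds (1 : G)).HasBasis (fun _ : ℕ => True) fun n => (seq n : Set G)
  index_ne_zero : ∀ n, (seq n).index ≠ 0
  two_le_relindex : ∀ n, 2 ≤ (seq (n + 1)).relIndex (seq n)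
/-- Data for the unitary dual `Ĝ` of a compact Vilenkin group `G`: a family of pairwise
inequivalent continuous irreducible unitary representations indexed by `ι`, with dimensions
`dim`, levels `lvl` (so `⟨ξ_i⟩ = |G/G_{lvl i}|`), satisfying the Plancherel identity and the
Peter–Weyl counting identity. -/
structure DualData (G : Type*) [Group G] [TopologicalSpace G] [MeasurableSpace G]
    (V : VilenkinData G) (μ : Measure G) where
  ι : Type
  dim : ι → ℕ
  dim_pos : ∀ i, 0 < dim i
  lvl : ι → ℕ
  rep : ∀ i, G →* Matrix.unitaryGroup (Fin (dim i)) ℂ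
  rep_continuous : ∀ i, Continuous fun x => ((rep i) x : Matrix (Fin (dim i)) (Fin (dim i)) ℂ)
  rep_irr : ∀ i, IsIrreducibleRep (rep i)
  lvl_triv : ∀ i, ∀ x ∈ V.seq (lvl i), rep i x = 1
  lvl_min : ∀ i, 0 < lvl i → ∃ x ∈ V.seq (lvl i - 1), rep i x ≠ 1
  plancherel : ∀ f : G → ℂ, MemLp f 2 μ →
    ∫ x, ‖f x‖ ^ 2 ∂μ = ∑' i, (dim i : ℝ) * hsNorm (fourierCoef μ f (rep i)) ^ 2
  count : ∀ n, HasSum (fun i : {i // lvl i ≤ n} => ((dim i.1 : ℝ)) ^ 2) ((V.seq n).index : ℝ)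

/-!
Translating `f` by `h` multiplies each Fourier coefficient on the right by `ξ(h) - I`. For
`h ∈ G_k` this kills every `ξ` with `⟨ξ⟩ ≤ |G/G_k|`, since such `ξ` is trivial on `G_k`, and
otherwise at most doubles the Hilbert–Schmidt norm because `ξ(h)` is unitary. By Plancherel,
`‖f(h·) - f‖₂²` is then at most four times the tail `∑_{⟨ξ⟩ > |G/G_k|} d_ξ ‖f̂(ξ)‖²_HS`.
-/

section HilbertSchmidt

open Matrix

attribute [local instance] frobeniusNormedAddCommGroup

variable {n : ℕ}

lemma hsNorm_eq_frobenius_norm (M : Matrix (Fin n) (Fin n) ℂ) : hsNorm M = ‖M‖ := by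
  rw [frobenius_norm_def, hsNorm, Real.sqrt_eq_rpow]
  simp only [Real.rpow_two]

lemma hsNorm_eq_sqrt_re_trace (M : Matrix (Fin n) (Fin n) ℂ) :
    hsNorm M = √(M * Mᴴ).trace.re := by
  simp only [hsNorm, trace, diag, mul_apply, conjTranspose_apply, Complex.re_sum,
    RCLike.star_def, Complex.mul_conj, Complex.ofReal_re, Complex.normSq_eq_norm_sq]

lemma hsNorm_sub_le (A B : Matrix (Fin n) (Fin n) ℂ) :
    hsNorm (A - B) ≤ hsNorm A + hsNorm B := by
  simp only [hsNorm_eq_frobenius_norm]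
  exact norm_sub_le A B

lemma hsNorm_mul_unitary (M : Matrix (Fin n) (Fin n) ℂ) {U : Matrix (Fin n) (Fin n) ℂ}
    (hU : U ∈ unitaryGroup (Fin n) ℂ) : hsNorm (M * U) = hsNorm M := by
  rw [hsNorm_eq_sqrt_re_trace, hsNorm_eq_sqrt_re_trace, conjTranspose_mul, Matrix.mul_assoc,
    ← Matrix.mul_assoc U, ← star_eq_conjTranspose, mem_unitaryGroup_iff.mp hU, Matrix.one_mul]

lemma hsNorm_mul_unitary_sub_le (M : Matrix (Fin n) (Fin n) ℂ) {U : Matrix (Fin n) (Fin n) ℂ}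
    (hU : U ∈ unitaryGroup (Fin n) ℂ) : hsNorm (M * U - M) ≤ 2 * hsNorm M := by
  have := hsNorm_sub_le (M * U) M
  rwa [hsNorm_mul_unitary M hU, ← two_mul] at this

end HilbertSchmidt

section FourierCoefficients

variable {G : Type*} [Group G] [TopologicalSpace G] [MeasurableSpace G] {μ : Measure G}
  {n : ℕ} {ξ : G →* Matrix.unitaryGroup (Fin n) ℂ}

lemma fourierCoef_congr_ae {f g : G → ℂ} (hfg : f =ᵐ[μ] g) :
    fourierCoef μ f ξ = fourierCoef μ g ξ := by
  ext i j
  exact integral_congr_ae (hfg.mono fun x hx => by simp only [hx])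

@[simp]
lemma fourierCoef_zero : fourierCoef μ 0 ξ = 0 := by
  ext i j
  simp [fourierCoef]

lemma integrable_mul_conj_rep_apply [OpensMeasurableSpace G] {f : G → ℂ} (hf : Integrable f μ)
    (hξ : Continuous fun x => (ξ x : Matrix (Fin n) (Fin n) ℂ)) (i j : Fin n) :
    Integrable (fun x => f x * starRingEnd ℂ ((ξ x : Matrix (Fin n) (Fin n) ℂ) i j)) μ :=
  hf.mul_bdd (c := 1) (Complex.continuous_conj.comp (hξ.matrix_elem i j)).aestronglyMeasurable <|
    .of_forall fun x => by
      rw [RCLike.norm_conj]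
      exact entry_norm_bound_of_unitary (ξ x).2 i j

lemma fourierCoef_sub [OpensMeasurableSpace G] {f g : G → ℂ} (hf : Integrable f μ)
    (hg : Integrable g μ) (hξ : Continuous fun x => (ξ x : Matrix (Fin n) (Fin n) ℂ)) :
    fourierCoef μ (fun x => f x - g x) ξ = fourierCoef μ f ξ - fourierCoef μ g ξ := by
  ext i j
  simp only [fourierCoef, Matrix.of_apply, Matrix.sub_apply, sub_mul]
  exact integral_sub (integrable_mul_conj_rep_apply hf hξ j i)
    (integrable_mul_conj_rep_apply hg hξ j i)

lemma fourierCoef_comp_mul_left [OpensMeasurableSpace G] [MeasurableMul G]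
    [μ.IsMulLeftInvariant] {f : G → ℂ} (hf : Integrable f μ)
    (hξ : Continuous fun x => (ξ x : Matrix (Fin n) (Fin n) ℂ)) (h : G) :
    fourierCoef μ (fun x => f (h * x)) ξ
      = fourierCoef μ f ξ * (ξ h : Matrix (Fin n) (Fin n) ℂ) := by
  ext i j
  have hinv : ∀ x, (ξ (h⁻¹ * x) : Matrix (Fin n) (Fin n) ℂ)
      = star (ξ h : Matrix (Fin n) (Fin n) ℂ) * ξ x := fun x => by
    rw [map_mul, map_inv]; rfl
  calc ∫ x, f (h * x) * starRingEnd ℂ ((ξ x : Matrix (Fin n) (Fin n) ℂ) j i) ∂μ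
      = ∫ x, f x * starRingEnd ℂ ((ξ (h⁻¹ * x) : Matrix (Fin n) (Fin n) ℂ) j i) ∂μ := by
        conv_rhs => rw [← integral_mul_left_eq_self _ h]
        simp only [inv_mul_cancel_left]
    _ = ∫ x, ∑ l, f x * starRingEnd ℂ ((ξ x : Matrix (Fin n) (Fin n) ℂ) l i)
          * (ξ h : Matrix (Fin n) (Fin n) ℂ) l j ∂μ := by
        congr 1 with x
        rw [hinv]
        simp only [Matrix.mul_apply, Matrix.star_apply, map_sum, map_mul,
          RCLike.star_def, Complex.conj_conj, Finset.mul_sum]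
        exact Finset.sum_congr rfl fun l _ => by ring
    _ = ∑ l, fourierCoef μ f ξ i l * (ξ h : Matrix (Fin n) (Fin n) ℂ) l j := by
        rw [integral_finsetSum _ fun l _ => (integrable_mul_conj_rep_apply hf hξ l i).mul_const _]
        simp only [integral_mul_const, fourierCoef, Matrix.of_apply]

lemma fourierCoef_mul_left_sub [OpensMeasurableSpace G] [MeasurableMul G]
    [μ.IsMulLeftInvariant] {f : G → ℂ} (hf : Integrable f μ)
    (hξ : Continuous fun x => (ξ x : Matrix (Fin n) (Fin n) ℂ)) (h : G) :
    fourierCoef μ (fun x => f (h * x) - f x) ξ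
      = fourierCoef μ f ξ * (ξ h : Matrix (Fin n) (Fin n) ℂ) - fourierCoef μ f ξ := by
  rw [fourierCoef_sub (hf.comp_mul_left h) hf hξ, fourierCoef_comp_mul_left hf hξ]

end FourierCoefficients

lemma MeasureTheory.MemLp.eLpNorm_two_eq_ofReal_sqrt_integral {α E : Type*} [MeasurableSpace α]
    {μ : Measure α} [NormedAddCommGroup E] {f : α → E} (hf : MemLp f 2 μ) :
    eLpNorm f 2 μ = ENNReal.ofReal √(∫ x, ‖f x‖ ^ 2 ∂μ) := by
  rw [hf.eLpNorm_eq_integral_rpow_norm two_ne_zero ENNReal.ofNat_ne_top, Real.sqrt_eq_rpow]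
  norm_num [Real.rpow_two]

namespace DualData

variable {G : Type*} [Group G] [TopologicalSpace G] [MeasurableSpace G] {V : VilenkinData G}
  {μ : Measure G} (D : DualData G V μ)

def fourierMass (f : G → ℂ) (i : D.ι) : ℝ :=
  (D.dim i : ℝ) * hsNorm (fourierCoef μ f (D.rep i)) ^ 2

lemma fourierMass_nonneg (f : G → ℂ) (i : D.ι) : 0 ≤ D.fourierMass f i := by
  unfold fourierMass
  positivity

lemma summable_fourierMass {f : G → ℂ} (hf : MemLp f 2 μ) : Summable (D.fourierMass f) := by
  by_contra hsum
  have hnorm : ∫ x, ‖f x‖ ^ 2 ∂μ = 0 := by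
    rw [D.plancherel f hf]
    exact tsum_eq_zero_of_not_summable hsum
  have hf0 : f =ᵐ[μ] 0 := by
    filter_upwards [(integral_eq_zero_iff_of_nonneg (fun x => by positivity)
      (hf.integrable_norm_pow two_ne_zero)).mp hnorm] with x hx
    simpa using hx
  refine hsum (summable_zero.congr fun i => ?_)
  simp [fourierMass, fourierCoef_congr_ae hf0, hsNorm]

lemma eLpNorm_two_eq {f : G → ℂ} (hf : MemLp f 2 μ) :
    eLpNorm f 2 μ = ENNReal.ofReal √(∑' i, D.fourierMass f i) := by
  rw [hf.eLpNorm_two_eq_ofReal_sqrt_integral, D.plancherel f hf]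
  rfl

variable [OpensMeasurableSpace G] [MeasurableMul G] [μ.IsMulLeftInvariant]

lemma fourierMass_mul_left_sub_le {f : G → ℂ} (hf : Integrable f μ) (h : G) (i : D.ι) :
    D.fourierMass (fun x => f (h * x) - f x) i ≤ 4 * D.fourierMass f i := by
  have hcoef := hsNorm_mul_unitary_sub_le (fourierCoef μ f (D.rep i)) (D.rep i h).2
  rw [← fourierCoef_mul_left_sub hf (D.rep_continuous i)] at hcoef
  calc D.fourierMass (fun x => f (h * x) - f x) i
      ≤ D.dim i * (2 * hsNorm (fourierCoef μ f (D.rep i))) ^ 2 := by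
        unfold fourierMass
        gcongr
        exact Real.sqrt_nonneg _
    _ = 4 * D.fourierMass f i := by
        unfold fourierMass
        ring

lemma fourierMass_mul_left_sub_eq_zero {f : G → ℂ} (hf : Integrable f μ) {i : D.ι} {h : G}
    (hh : h ∈ V.seq (D.lvl i)) : D.fourierMass (fun x => f (h * x) - f x) i = 0 := by
  simp [fourierMass, fourierCoef_mul_left_sub hf (D.rep_continuous i), D.lvl_triv i h hh, hsNorm]

lemma tsum_fourierMass_mul_left_sub_le [IsFiniteMeasure μ] {f : G → ℂ} (hf : MemLp f 2 μ)
    {k : ℕ} {h : G} (hh : h ∈ V.seq k) :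
    ∑' i, D.fourierMass (fun x => f (h * x) - f x) i
      ≤ 4 * ∑' i : {i // k < D.lvl i}, D.fourierMass f i.1 := by
  have hfi := hf.integrable one_le_two
  have hle : ∀ i, D.fourierMass (fun x => f (h * x) - f x) i
      ≤ {i | k < D.lvl i}.indicator (fun i => 4 * D.fourierMass f i) i := by
    intro i
    by_cases hi : k < D.lvl i
    · simpa [hi] using D.fourierMass_mul_left_sub_le hfi h i
    · simp [hi, D.fourierMass_mul_left_sub_eq_zero hfi
        (V.strictAnti.antitone (not_lt.mp hi) hh)]
  have hsum : Summable ({i | k < D.lvl i}.indicator fun i => 4 * D.fourierMass f i) :=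
    ((D.summable_fourierMass hf).mul_left 4).indicator _
  calc ∑' i, D.fourierMass (fun x => f (h * x) - f x) i
      ≤ ∑' i, {i | k < D.lvl i}.indicator (fun i => 4 * D.fourierMass f i) i :=
        (hsum.of_nonneg_of_le (D.fourierMass_nonneg _) hle).tsum_le_tsum hle hsum
    _ = 4 * ∑' i : {i // k < D.lvl i}, D.fourierMass f i.1 := by
        rw [← tsum_subtype, tsum_mul_left]
        rfl

end DualData

lemma Real.sqrt_mul_rpow_neg_two_mul {C t : ℝ} (hC : 0 ≤ C) (ht : 0 ≤ t) (α : ℝ) :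
    √(C * t ^ (-(2 * α))) = √C * t⁻¹ ^ α := by
  rw [Real.sqrt_mul hC, Real.rpow_neg ht, mul_comm 2 α, Real.rpow_mul ht, Real.rpow_two,
    ← inv_pow, Real.sqrt_sq (by positivity), Real.inv_rpow ht]

theorem second_titchmarsh_sufficiency_general
    {G : Type*} [Group G] [TopologicalSpace G] [IsTopologicalGroup G] [CompactSpace G]
    [MeasurableSpace G] [BorelSpace G]
    (V : VilenkinData G) (μ : Measure G) [μ.IsHaarMeasure]
    (D : DualData G V μ) (α : ℝ)
    (f : G → ℂ) (hf : MemLp f 2 μ)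
    (hO : ∃ C > (0 : ℝ), ∀ k : ℕ,
      (∑' i : {i // k < D.lvl i},
          (D.dim i.1 : ℝ) * hsNorm (fourierCoef μ f (D.rep i.1)) ^ 2) ≤
        C * ((V.seq k).index : ℝ) ^ (-(2 * α))) :
    ∃ C > (0 : ℝ), ∀ k : ℕ, ∀ h ∈ V.seq k,
      eLpNorm (fun x => f (h * x) - f x) 2 μ ≤
        ENNReal.ofReal (C * (((V.seq k).index : ℝ)⁻¹) ^ α) := by
  obtain ⟨C, hC, hCk⟩ := hO
  refine ⟨2 * √C, by positivity, fun k h hh => ?_⟩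
  have hdiff : MemLp (fun x => f (h * x) - f x) 2 μ :=
    (hf.comp_measurePreserving (measurePreserving_mul_left μ h)).sub hf
  rw [D.eLpNorm_two_eq hdiff]
  gcongr
  calc √(∑' i, D.fourierMass (fun x => f (h * x) - f x) i)
      ≤ √(4 * (C * ((V.seq k).index : ℝ) ^ (-(2 * α)))) := by
        gcongr
        exact (D.tsum_fourierMass_mul_left_sub_le hf hh).trans (by gcongr; exact hCk k)
    _ = 2 * √C * ((V.seq k).index : ℝ)⁻¹ ^ α := by
        have hsqrt4 : √(4 : ℝ) = 2 := by
          rw [show (4 : ℝ) = 2 ^ 2 by norm_num, Real.sqrt_sq zero_le_two]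
        rw [Real.sqrt_mul zero_le_four, Real.sqrt_mul_rpow_neg_two_mul hC.le (Nat.cast_nonneg _),
          hsqrt4, mul_assoc]

/-- **Second Titchmarsh theorem (sufficiency).** Let `0 < α ≤ 1` and `f ∈ L²(μ_G)`. If
`∑_{⟨ξ⟩ > |G/G_k|} d_ξ ‖f̂(ξ)‖²_HS = O(|G/G_k|^{-2α})` as `k → ∞`, then
`f ∈ Lip_𝒢(α;2)`, i.e. `‖f(h·) - f‖_{L²} = O(|h|_𝒢^α)` as `|h|_𝒢 → 0` (for
`h ∈ G_k` one has `|h|_𝒢 ≤ |G/G_k|⁻¹`). -/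
theorem second_titchmarsh_sufficiency
    {G : Type*} [Group G] [TopologicalSpace G] [IsTopologicalGroup G] [CompactSpace G]
    [TotallyDisconnectedSpace G] [MeasurableSpace G] [BorelSpace G]
    (V : VilenkinData G) (μ : Measure G) [μ.IsHaarMeasure] [IsProbabilityMeasure μ]
    (D : DualData G V μ) (α : ℝ) (hα₀ : 0 < α) (hα₁ : α ≤ 1)
    (f : G → ℂ) (hf : MemLp f 2 μ)
    (hO : ∃ C > (0 : ℝ), ∀ k : ℕ,
      (∑' i : {i // k < D.lvl i},
          (D.dim i.1 : ℝ) * hsNorm (fourierCoef μ f (D.rep i.1)) ^ 2) ≤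
        C * ((V.seq k).index : ℝ) ^ (-(2 * α))) :
    ∃ C > (0 : ℝ), ∀ k : ℕ, ∀ h ∈ V.seq k,
      eLpNorm (fun x => f (h * x) - f x) 2 μ ≤
        ENNReal.ofReal (C * (((V.seq k).index : ℝ)⁻¹) ^ α) :=
  second_titchmarsh_sufficiency_general V μ D α f hf hO
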